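/- Let B' be a symmetric nondegenerate complex m×m matrix with positive definite imaginary part and let w ∈ ℂ^m. Then ∫_{ℝ^m} exp((i/2) xᵀB'x + i wᵀx) dx = √((2πi)^m / det B') · exp(−(i/2) wᵀ(B')^{-1} w), for the appropriate branch of the square root. -/

import Mathlib

open Real

/-- Gaussian integral with complex quadratic coefficient (case `m = 1`):
for `b ∈ ℂ` with `Im b > 0` and `w ∈ ℂ`,
`∫_ℝ exp((i/2) b x² + i w x) dx = √(2πi/b) · exp(-(i/2) w²/b)`,
with the principal branch of the square root (which agrees with the branch
obtained by analytic continuation from `b = i`, since `Re (2πi/b) > 0`). -/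
theorem gaussian_integral_complex (b w : ℂ) (hb : 0 < b.im) :
    ∫ x : ℝ, Complex.exp (Complex.I / 2 * b * (x : ℂ) ^ 2 + Complex.I * w * (x : ℂ))
      = (2 * (π : ℂ) * Complex.I / b) ^ ((1 : ℂ) / 2) *
        Complex.exp (-(Complex.I / 2) * w ^ 2 / b) := by
  have hb0 : b ≠ 0 := by
    intro h; rw [h] at hb; simp at hb
  have hre : (Complex.I / 2 * b).re < 0 := by
    simp [Complex.div_re, Complex.mul_re, Complex.I_re, Complex.I_im]
    linarith
  have h := integral_cexp_quadratic hre (Complex.I * w) 0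
  simp only [add_zero] at h
  rw [h]
  congr 1
  · congr 1
    field_simp
    linear_combination (-1 : ℂ) * Complex.I_sq
  · congr 1
    field_simp
    ring
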